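/- arXiv:1511.06825 — 2 statements merged into one kernel-verified Lean document; each statement's English description precedes it below -/
import Mathlib

section
/- There exists an instance of the VM placement problem (with CPU, RAM, network demands each bounded by 1 per machine) in which a schedule using 2 machines has total busy time 20, while a schedule using 3 machines has total busy time 14; hence minimizing the number of machines does not minimize total busy time. -/
open MeasureTheory Set Finset
open scoped Classical

/-- Starting times of the six VMs. -/
noncomputable def ts : Fin 6 → ℝ := ![0, 0, 0, 0, 0, 1]

/-- Durations of the six VMs. -/
noncomputable def dur : Fin 6 → ℝ := ![10, 2, 2, 2, 2, 9]

/-- CPU demands. -/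
noncomputable def cpu : Fin 6 → ℝ := ![0.5, 0.5, 0.2, 0.2, 0.1, 0.5]

/-- RAM demands. -/
noncomputable def ram : Fin 6 → ℝ := ![0.1, 0.5, 0.4, 0.4, 0.1, 0.5]

/-- Network demands. -/
noncomputable def net : Fin 6 → ℝ := ![0.2, 0.2, 0.2, 0.2, 0.1, 0.2]

/-- A schedule `f` on `m` machines is feasible if, at every time `t` and on every
machine `j`, the sums of active VMs' cpu, ram and net demands are each at most 1. -/
noncomputable def Feasible {m : ℕ} (f : Fin 6 → Fin m) : Prop :=
  ∀ (t : ℝ) (j : Fin m),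
    (∑ i : Fin 6, if f i = j ∧ t ∈ Icc (ts i) (ts i + dur i) then cpu i else 0) ≤ 1 ∧
    (∑ i : Fin 6, if f i = j ∧ t ∈ Icc (ts i) (ts i + dur i) then ram i else 0) ≤ 1 ∧
    (∑ i : Fin 6, if f i = j ∧ t ∈ Icc (ts i) (ts i + dur i) then net i else 0) ≤ 1

/-- Busy time of machine `j` under schedule `f`: measure of the union of the
intervals of the VMs assigned to `j`. -/
noncomputable def busyTime {m : ℕ} (f : Fin 6 → Fin m) (j : Fin m) : ℝ :=
  (volume (⋃ i ∈ {i : Fin 6 | f i = j}, Icc (ts i) (ts i + dur i))).toReal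

/-- Total busy time of a schedule. -/
noncomputable def totalBusyTime {m : ℕ} (f : Fin 6 → Fin m) : ℝ :=
  ∑ j, busyTime f j


/-!
VM1 and VM6 (indices 0 and 5) are the long jobs. On two machines they run on different machines,
and each machine, joined by short jobs, is busy during all of `[0, 10]`: busy time 20. On three
machines the long jobs share one machine (busy 10) and the four short jobs fill the two others,
each busy only during `[0, 2]`: busy time 14. In both schedules every machine stays within capacity
even if all of its VMs ran simultaneously, so feasibility needs no reasoning about time.
-/

noncomputable def load {m : ℕ} (f : Fin 6 → Fin m) (d : Fin 6 → ℝ) (j : Fin m) : ℝ :=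
  ∑ i, if f i = j then d i else 0

lemma sum_ite_and_le_sum_ite {ι M : Type*} [Fintype ι] [AddCommMonoid M] [PartialOrder M]
    [IsOrderedAddMonoid M] {d : ι → M} (hd : 0 ≤ d) (p q : ι → Prop)
    [DecidablePred p] [DecidablePred q] :
    (∑ i, if p i ∧ q i then d i else 0) ≤ ∑ i, if p i then d i else 0 :=
  Finset.sum_le_sum fun i _ => by
    by_cases hp : p i <;> by_cases hq : q i <;> simp [hp, hq, show 0 ≤ d i from hd i]

lemma cpu_nonneg : 0 ≤ cpu := by
  intro i; fin_cases i <;> norm_num [cpu]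

lemma ram_nonneg : 0 ≤ ram := by
  intro i; fin_cases i <;> norm_num [ram]

lemma net_nonneg : 0 ≤ net := by
  intro i; fin_cases i <;> norm_num [net]

lemma feasible_of_load_le_one {m : ℕ} {f : Fin 6 → Fin m}
    (h : ∀ j, load f cpu j ≤ 1 ∧ load f ram j ≤ 1 ∧ load f net j ≤ 1) : Feasible f := by
  intro t j
  obtain ⟨hcpu, hram, hnet⟩ := h j
  exact ⟨(sum_ite_and_le_sum_ite cpu_nonneg _ _).trans hcpu,
    (sum_ite_and_le_sum_ite ram_nonneg _ _).trans hram,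
    (sum_ite_and_le_sum_ite net_nonneg _ _).trans hnet⟩

lemma busyTime_eq_sub {m : ℕ} {f : Fin 6 → Fin m} {j : Fin m} {a b : ℝ} (hab : a ≤ b)
    (hsub : ∀ i, f i = j → Set.Icc (ts i) (ts i + dur i) ⊆ Set.Icc a b)
    (hcov : Set.Icc a b ⊆ ⋃ i ∈ {i | f i = j}, Set.Icc (ts i) (ts i + dur i)) :
    busyTime f j = b - a := by
  have hunion : ⋃ i ∈ {i | f i = j}, Set.Icc (ts i) (ts i + dur i) = Set.Icc a b :=
    (iUnion₂_subset fun i hi => hsub i hi).antisymm hcov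
  rw [busyTime, hunion, Real.volume_Icc, ENNReal.toReal_ofReal (sub_nonneg.mpr hab)]

def activeInterval : Fin 6 → Set ℝ :=
  ![Set.Icc 0 10, Set.Icc 0 2, Set.Icc 0 2, Set.Icc 0 2, Set.Icc 0 2, Set.Icc 1 10]

lemma Icc_ts_dur_eq_activeInterval (i : Fin 6) :
    Set.Icc (ts i) (ts i + dur i) = activeInterval i := by
  fin_cases i <;> norm_num [ts, dur, activeInterval]

lemma Icc_ts_dur_subset (i : Fin 6) : Set.Icc (ts i) (ts i + dur i) ⊆ Set.Icc 0 10 := by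
  rw [Icc_ts_dur_eq_activeInterval]
  fin_cases i <;> simp [activeInterval, Set.Icc_subset_Icc_iff] <;> norm_num

lemma activeInterval_subset_biUnion {m : ℕ} {f : Fin 6 → Fin m} {i : Fin 6} {j : Fin m}
    (hi : f i = j) :
    activeInterval i ⊆ ⋃ i' ∈ {i' | f i' = j}, Set.Icc (ts i') (ts i' + dur i') :=
  Icc_ts_dur_eq_activeInterval i ▸
    subset_biUnion_of_mem (u := fun i' => Set.Icc (ts i') (ts i' + dur i')) hi

def twoMachineSchedule : Fin 6 → Fin 2 := ![0, 1, 0, 0, 0, 1]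

def threeMachineSchedule : Fin 6 → Fin 3 := ![0, 1, 2, 2, 1, 0]

lemma twoMachineSchedule_feasible : Feasible twoMachineSchedule := by
  refine feasible_of_load_le_one fun j => ?_
  fin_cases j <;> simp [load, Fin.sum_univ_six, twoMachineSchedule, cpu, ram, net] <;> norm_num

lemma threeMachineSchedule_feasible : Feasible threeMachineSchedule := by
  refine feasible_of_load_le_one fun j => ?_
  fin_cases j <;> simp [load, Fin.sum_univ_six, threeMachineSchedule, cpu, ram, net] <;> norm_num

lemma twoMachineSchedule_busyTime (j : Fin 2) : busyTime twoMachineSchedule j = 10 := by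
  refine (busyTime_eq_sub (by norm_num) (fun i _ => Icc_ts_dur_subset i) ?_).trans (by norm_num)
  fin_cases j
  · exact activeInterval_subset_biUnion (i := 0) rfl
  · have hsplit : Set.Icc (0 : ℝ) 10 = Set.Icc 0 2 ∪ Set.Icc 1 10 := by
      rw [Set.Icc_union_Icc' (by norm_num) (by norm_num)]
      norm_num
    rw [hsplit]
    exact Set.union_subset (activeInterval_subset_biUnion (i := 1) rfl)
      (activeInterval_subset_biUnion (i := 5) rfl)

lemma twoMachineSchedule_totalBusyTime : totalBusyTime twoMachineSchedule = 20 := by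
  rw [totalBusyTime, Fin.sum_univ_two, twoMachineSchedule_busyTime, twoMachineSchedule_busyTime]
  norm_num

lemma threeMachineSchedule_busyTime_zero : busyTime threeMachineSchedule 0 = 10 :=
  (busyTime_eq_sub (by norm_num) (fun i _ => Icc_ts_dur_subset i)
    (activeInterval_subset_biUnion (i := 0) rfl)).trans (by norm_num)

lemma threeMachineSchedule_busyTime_of_ne_zero {j : Fin 3} (hj : j ≠ 0) :
    busyTime threeMachineSchedule j = 2 := by
  refine (busyTime_eq_sub (a := 0) (b := 2) (by norm_num) (fun i hi => ?_) ?_).trans (by norm_num)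
  · rw [Icc_ts_dur_eq_activeInterval]
    fin_cases i <;> simp [threeMachineSchedule] at hi <;> first | exact absurd hi.symm hj | rfl
  · fin_cases j
    · exact absurd rfl hj
    · exact activeInterval_subset_biUnion (i := 1) rfl
    · exact activeInterval_subset_biUnion (i := 2) rfl

lemma threeMachineSchedule_totalBusyTime : totalBusyTime threeMachineSchedule = 14 := by
  rw [totalBusyTime, Fin.sum_univ_three, threeMachineSchedule_busyTime_zero,
    threeMachineSchedule_busyTime_of_ne_zero (by decide),
    threeMachineSchedule_busyTime_of_ne_zero (by decide)]
  norm_num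

/-- There is an instance (the six VMs above) where a feasible schedule on 2
machines has total busy time 20, while a feasible schedule on 3 machines has
total busy time 14 < 20: minimizing machines does not minimize busy time. -/
theorem min_machines_not_min_busy_time :
    ∃ (f₂ : Fin 6 → Fin 2) (f₃ : Fin 6 → Fin 3),
      Feasible f₂ ∧ Feasible f₃ ∧
      totalBusyTime f₂ = 20 ∧ totalBusyTime f₃ = 14 ∧
      totalBusyTime f₃ < totalBusyTime f₂ := by
  refine ⟨twoMachineSchedule, threeMachineSchedule, twoMachineSchedule_feasible,
    threeMachineSchedule_feasible, twoMachineSchedule_totalBusyTime,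
    threeMachineSchedule_totalBusyTime, ?_⟩
  rw [twoMachineSchedule_totalBusyTime, threeMachineSchedule_totalBusyTime]
  norm_num
end

section
/- Swapping reduces total busy time: suppose machine A currently hosts a VM with interval [ts₂, ts₂+dur₂] and its busy time from other VMs is the interval [ts₁, ts₁+dur₁] ⊇ [ts₂, ts₂+dur₂], and a new VM has interval [ts₂, ts₂+dur₂'] with dur₂' > dur₂ and [ts₂, ts₂+dur₂'] ⊆ [ts₁, ts₁+dur₁]. Placing the new VM on A and moving the old VM to a fresh machine B gives total busy time (dur₁ + dur₂), which is less than the busy time (dur₁ + dur₂') obtained by placing the new VM on the fresh machine B instead. -/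
open MeasureTheory Set

theorem swap_reduces_total_busy_time (ts₁ ts₂ dur₁ dur₂ dur₂' : ℝ)
    (hdur₂ : 0 ≤ dur₂) (hlt : dur₂ < dur₂')
    (hsub : Icc ts₂ (ts₂ + dur₂') ⊆ Icc ts₁ (ts₁ + dur₁)) :
    (volume (Icc ts₁ (ts₁ + dur₁) ∪ Icc ts₂ (ts₂ + dur₂'))).toReal +
        (volume (Icc ts₂ (ts₂ + dur₂))).toReal = dur₁ + dur₂ ∧
      (volume (Icc ts₁ (ts₁ + dur₁))).toReal +
        (volume (Icc ts₂ (ts₂ + dur₂'))).toReal = dur₁ + dur₂' ∧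
      dur₁ + dur₂ < dur₁ + dur₂' := by
  have hdur₂' : 0 ≤ dur₂' := le_of_lt (lt_of_le_of_lt hdur₂ hlt)
  have hne : (Icc ts₂ (ts₂ + dur₂')).Nonempty := by
    rw [nonempty_Icc]; linarith
  have hdur₁ : 0 ≤ dur₁ := by
    have := hsub hne.some_mem
    have h1 : ts₁ ≤ ts₁ + dur₁ := le_trans this.1 this.2
    linarith
  have hu : Icc ts₁ (ts₁ + dur₁) ∪ Icc ts₂ (ts₂ + dur₂') = Icc ts₁ (ts₁ + dur₁) :=
    union_eq_self_of_subset_right hsub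
  rw [hu]
  simp only [Real.volume_Icc]
  have e1 : ts₁ + dur₁ - ts₁ = dur₁ := by ring
  have e2 : ts₂ + dur₂ - ts₂ = dur₂ := by ring
  have e3 : ts₂ + dur₂' - ts₂ = dur₂' := by ring
  rw [e1, e2, e3, ENNReal.toReal_ofReal hdur₁, ENNReal.toReal_ofReal hdur₂,
    ENNReal.toReal_ofReal hdur₂']
  exact ⟨rfl, rfl, by linarith⟩
end
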